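/- Uniform positivity of the underestimation exponent: let κ > 0, I_inf > 0, and let B be the set of joint distributions P on X² with all entries ≥ κ and mutual information I(P) ≥ I_inf. Then inf over P ∈ B of min{ D(Q||P) : I(Q) = 0 } is strictly positive; in fact it is at least I_inf² / (2·log 2 · U²), where U = max over Q with entries ≥ κ'' of the sup-norm of the gradient of I at Q, for an appropriate uniform κ'' > 0. -/
import Mathlib


open Finset

/-- KL divergence on a finite alphabet. -/
noncomputable def klDiv {Y : Type*} [Fintype Y] (Q P : Y → ℝ) : ℝ :=
  ∑ a : Y, Q a * Real.log (Q a / P a)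

/-- Mutual information of a joint distribution on `X × X`. -/
noncomputable def mutInfo {X : Type*} [Fintype X] (Q : X × X → ℝ) : ℝ :=
  ∑ z : X × X,
    Q z * Real.log (Q z / ((∑ y : X, Q (z.1, y)) * (∑ x : X, Q (x, z.2))))

private lemma term_ge {q p : ℝ} (hq : 0 ≤ q) (hp : 0 ≤ p) (h0 : p = 0 → q = 0) :
    q - p ≤ q * Real.log (q / p) := by
  rcases eq_or_lt_of_le hq with hq0 | hq0
  · simp [← hq0]; linarith
  · have hp0 : 0 < p := lt_of_le_of_ne hp (fun h => by simp [h0 h.symm] at hq0)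
    have ht : 0 < q / p := div_pos hq0 hp0
    have := Real.log_le_sub_one_of_pos (inv_pos.2 ht)
    rw [Real.log_inv] at this
    have hlog : 1 - (q / p)⁻¹ ≤ Real.log (q / p) := by linarith
    have : q * (1 - (q / p)⁻¹) ≤ q * Real.log (q / p) :=
      mul_le_mul_of_nonneg_left hlog hq
    have heq : q * (1 - (q / p)⁻¹) = q - p := by
      field_simp
    linarith [heq ▸ this]

private lemma term_eq {q p : ℝ} (hq : 0 ≤ q) (hp : 0 ≤ p) (h0 : p = 0 → q = 0)
    (h : q * Real.log (q / p) = q - p) : q = p := by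
  rcases eq_or_lt_of_le hq with hq0 | hq0
  · simp [← hq0] at h ⊢; linarith
  · have hp0 : 0 < p := lt_of_le_of_ne hp (fun h' => by simp [h0 h'.symm] at hq0)
    by_contra hne
    have ht : 0 < q / p := div_pos hq0 hp0
    have htne : (q / p)⁻¹ ≠ 1 := by
      simp only [ne_eq, inv_eq_one]
      exact fun h' => hne (by field_simp at h'; linarith)
    have := Real.log_lt_sub_one_of_pos (inv_pos.2 ht) htne
    rw [Real.log_inv] at this
    have hlog : 1 - (q / p)⁻¹ < Real.log (q / p) := by linarith
    have hstrict : q * (1 - (q / p)⁻¹) < q * Real.log (q / p) :=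
      (mul_lt_mul_iff_right₀ hq0).2 hlog
    have heq : q * (1 - (q / p)⁻¹) = q - p := by field_simp
    rw [heq, h] at hstrict
    exact lt_irrefl _ hstrict

/-- Gibbs' inequality with equality case, on a finite alphabet. -/
private lemma klDiv_nonneg_and_eq {Y : Type*} [Fintype Y] (q p : Y → ℝ)
    (hq : ∀ z, 0 ≤ q z) (hp : ∀ z, 0 ≤ p z) (h0 : ∀ z, p z = 0 → q z = 0)
    (hsum : ∑ z, q z = ∑ z, p z) :
    0 ≤ klDiv q p ∧ (klDiv q p = 0 → q = p) := by
  have key : ∀ z ∈ Finset.univ, q z - p z ≤ q z * Real.log (q z / p z) :=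
    fun z _ => term_ge (hq z) (hp z) (h0 z)
  have h1 : ∑ z, (q z - p z) ≤ klDiv q p := Finset.sum_le_sum key
  have h2 : ∑ z, (q z - p z) = 0 := by
    rw [Finset.sum_sub_distrib, hsum]; ring
  constructor
  · linarith
  · intro hzero
    have : ∑ z, (q z - p z) = ∑ z, q z * Real.log (q z / p z) := by
      rw [h2]; exact hzero.symm
    have hterm := (Finset.sum_eq_sum_iff_of_le key).1 this
    funext z
    exact term_eq (hq z) (hp z) (h0 z) ((hterm z (Finset.mem_univ z)).symm)

private lemma q_le_marg {X : Type*} [Fintype X] (Q : X × X → ℝ) (hQ : ∀ z, 0 ≤ Q z)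
    (z : X × X) : Q z ≤ (∑ y : X, Q (z.1, y)) := by
  have := Finset.single_le_sum (f := fun y => Q (z.1, y))
    (fun y _ => hQ _) (Finset.mem_univ z.2)
  simpa using this

private lemma marg_sum {X : Type*} [Fintype X] (Q : X × X → ℝ) (hs : ∑ z, Q z = 1) :
    ∑ z : X × X, (∑ y : X, Q (z.1, y)) * (∑ x : X, Q (x, z.2)) = 1 := by
  rw [Fintype.sum_prod_type]
  have h1 : ∑ x : X, ∑ y : X, Q (x, y) = 1 := by
    rw [← Fintype.sum_prod_type]; exact hs
  calc ∑ x : X, ∑ y : X, (∑ y' : X, Q (x, y')) * (∑ x' : X, Q (x', y))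
      = ∑ x : X, (∑ y' : X, Q (x, y')) * (∑ y : X, ∑ x' : X, Q (x', y)) := by
        congr 1; funext x; rw [Finset.mul_sum]
    _ = ∑ x : X, (∑ y' : X, Q (x, y')) * 1 := by
        congr 1; funext x; congr 1
        rw [Finset.sum_comm]; exact h1
    _ = 1 := by simp [h1]

/-- If the mutual information vanishes, the distribution is a product of its marginals. -/
private lemma indep_of_mutInfo_zero {X : Type*} [Fintype X] (Q : X × X → ℝ)
    (hQ : ∀ z, 0 ≤ Q z) (hs : ∑ z, Q z = 1) (hm : mutInfo Q = 0) :
    ∀ z, Q z = (∑ y : X, Q (z.1, y)) * (∑ x : X, Q (x, z.2)) := by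
  set p : X × X → ℝ := fun z => (∑ y : X, Q (z.1, y)) * (∑ x : X, Q (x, z.2)) with hp_def
  have hp : ∀ z, 0 ≤ p z := fun z =>
    mul_nonneg (Finset.sum_nonneg fun _ _ => hQ _) (Finset.sum_nonneg fun _ _ => hQ _)
  have h0 : ∀ z, p z = 0 → Q z = 0 := by
    intro z hz
    rcases mul_eq_zero.1 hz with h | h
    · have := q_le_marg Q hQ z
      have := hQ z; linarith [h ▸ q_le_marg Q hQ z]
    · have h2 : Q z ≤ ∑ x : X, Q (x, z.2) := by
        have := Finset.single_le_sum (f := fun x => Q (x, z.2))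
          (fun x _ => hQ _) (Finset.mem_univ z.1)
        simpa using this
      have := hQ z; linarith [h ▸ h2]
  have hsum : ∑ z, Q z = ∑ z, p z := by rw [hs, marg_sum Q hs]
  have hkl : klDiv Q p = 0 := hm
  have := (klDiv_nonneg_and_eq Q p hQ hp h0 hsum).2 hkl
  intro z; exact congrFun this z

/-- A product of its marginals has zero mutual information. -/
private lemma mutInfo_zero_of_indep {X : Type*} [Fintype X] (Q : X × X → ℝ)
    (h : ∀ z, Q z = (∑ y : X, Q (z.1, y)) * (∑ x : X, Q (x, z.2))) :
    mutInfo Q = 0 := by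
  unfold mutInfo
  apply Finset.sum_eq_zero
  intro z _
  rcases eq_or_ne ((∑ y : X, Q (z.1, y)) * (∑ x : X, Q (x, z.2))) 0 with hz | hz
  · rw [h z, hz]; ring
  · rw [h z, div_self hz, Real.log_one, mul_zero]

/-- Uniform positivity of the underestimation exponent: over all joint distributions `P`
on `X²` with entries at least `κ` and mutual information at least `I_inf > 0`, the
quantity `min{D(Q||P) : I(Q) = 0}` is uniformly bounded below by the strictly positive
constant `I_inf² / (2·log 2·U²)`, where `U > 0` is a uniform Lipschitz constant for the
mutual information functional. -/
theorem underestimation_exponent_uniformly_positive {X : Type*} [Fintype X] [Nonempty X]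
    (κ Iinf : ℝ) (hκ : 0 < κ) (hIinf : 0 < Iinf) :
    ∃ U : ℝ, 0 < U ∧
      ∀ P : X × X → ℝ, (∀ z, κ ≤ P z) → (∑ z, P z = 1) → Iinf ≤ mutInfo P →
        ∀ Q : X × X → ℝ, (∀ z, 0 ≤ Q z) → (∑ z, Q z = 1) → mutInfo Q = 0 →
          Iinf ^ 2 / (2 * Real.log 2 * U ^ 2) ≤ klDiv Q P := by
  classical
  set E := (X × X → ℝ)
  set A : Set E := {P | (∀ z, κ ≤ P z) ∧ (∑ z, P z = 1) ∧ Iinf ≤ mutInfo P} with hA_def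
  set B : Set E := {Q | (∀ z, 0 ≤ Q z) ∧ (∑ z, Q z = 1) ∧
    ∀ z, Q z = (∑ y : X, Q (z.1, y)) * (∑ x : X, Q (x, z.2))} with hB_def
  set S : Set (E × E) := A ×ˢ B with hS_def
  -- membership of the given P, Q in S
  have hmem : ∀ P : E, (∀ z, κ ≤ P z) → (∑ z, P z = 1) → Iinf ≤ mutInfo P →
      ∀ Q : E, (∀ z, 0 ≤ Q z) → (∑ z, Q z = 1) → mutInfo Q = 0 → (P, Q) ∈ S := by
    intro P hP1 hP2 hP3 Q hQ1 hQ2 hQ3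
    exact ⟨⟨hP1, hP2, hP3⟩, ⟨hQ1, hQ2, indep_of_mutInfo_zero Q hQ1 hQ2 hQ3⟩⟩
  by_cases hS : S.Nonempty
  swap
  · refine ⟨1, one_pos, fun P hP1 hP2 hP3 Q hQ1 hQ2 hQ3 => ?_⟩
    exact absurd ⟨(P, Q), hmem P hP1 hP2 hP3 Q hQ1 hQ2 hQ3⟩ hS
  -- closedness of K and continuity of mutInfo on K
  have hKclosed : IsClosed {P : E | ∀ z, κ ≤ P z} := by
    have : {P : E | ∀ z, κ ≤ P z} = ⋂ z, {P : E | κ ≤ P z} := by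
      ext P; simp [Set.mem_iInter]
    rw [this]
    exact isClosed_iInter fun z => isClosed_le continuous_const (continuous_apply z)
  have hsum_cont : Continuous fun P : E => ∑ z, P z :=
    continuous_finset_sum _ fun z _ => continuous_apply z
  have hmarg1 : ∀ z : X × X, Continuous fun P : E => ∑ y : X, P (z.1, y) :=
    fun z => continuous_finset_sum _ fun y _ => continuous_apply _
  have hmarg2 : ∀ z : X × X, Continuous fun P : E => ∑ x : X, P (x, z.2) :=
    fun z => continuous_finset_sum _ fun x _ => continuous_apply _
  have hmutcont : ContinuousOn mutInfo {P : E | ∀ z, κ ≤ P z} := by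
    apply continuousOn_finset_sum
    intro z _
    apply ContinuousOn.mul (continuous_apply z).continuousOn
    apply ContinuousOn.log
    · exact ContinuousOn.div (continuous_apply z).continuousOn
        ((hmarg1 z).mul (hmarg2 z)).continuousOn
        (fun P hP => ne_of_gt (mul_pos
          (Finset.sum_pos (fun y _ => lt_of_lt_of_le hκ (hP _)) Finset.univ_nonempty)
          (Finset.sum_pos (fun x _ => lt_of_lt_of_le hκ (hP _)) Finset.univ_nonempty)))
    · intro P hP
      apply ne_of_gt
      apply div_pos (lt_of_lt_of_le hκ (hP z))
      exact mul_pos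
        (Finset.sum_pos (fun y _ => lt_of_lt_of_le hκ (hP _)) Finset.univ_nonempty)
        (Finset.sum_pos (fun x _ => lt_of_lt_of_le hκ (hP _)) Finset.univ_nonempty)
  -- S is closed
  have hAclosed : IsClosed A := by
    have : A = {P : E | ∑ z, P z = 1} ∩
        ({P : E | ∀ z, κ ≤ P z} ∩ mutInfo ⁻¹' Set.Ici Iinf) := by
      ext P; constructor
      · rintro ⟨h1, h2, h3⟩; exact ⟨h2, h1, h3⟩
      · rintro ⟨h2, h1, h3⟩; exact ⟨h1, h2, h3⟩
    rw [this]
    exact (isClosed_eq hsum_cont continuous_const).inter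
      (hmutcont.preimage_isClosed_of_isClosed hKclosed isClosed_Ici)
  have hBclosed : IsClosed B := by
    have : B = (⋂ z, {Q : E | 0 ≤ Q z}) ∩ ({Q : E | ∑ z, Q z = 1} ∩
        ⋂ z, {Q : E | Q z = (∑ y : X, Q (z.1, y)) * (∑ x : X, Q (x, z.2))}) := by
      ext Q
      simp only [hB_def, Set.mem_setOf_eq, Set.mem_inter_iff, Set.mem_iInter]
    rw [this]
    refine IsClosed.inter (isClosed_iInter fun z =>
        isClosed_le continuous_const (continuous_apply z)) ?_
    refine IsClosed.inter (isClosed_eq hsum_cont continuous_const) ?_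
    exact isClosed_iInter fun z =>
      isClosed_eq (continuous_apply z) ((hmarg1 z).mul (hmarg2 z))
  have hSclosed : IsClosed S := hAclosed.prod hBclosed
  -- S is compact
  have hScompact : IsCompact S := by
    apply IsCompact.of_isClosed_subset
      (((isCompact_univ_pi fun _ : X × X => isCompact_Icc (a := (0:ℝ)) (b := 1)).prod
        (isCompact_univ_pi fun _ : X × X => isCompact_Icc (a := (0:ℝ)) (b := 1))))
      hSclosed
    rintro ⟨P, Q⟩ ⟨⟨hP1, hP2, _⟩, hQ1, hQ2, _⟩
    constructor
    · intro z _
      refine ⟨le_of_lt (lt_of_lt_of_le hκ (hP1 z)), ?_⟩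
      have := Finset.single_le_sum (f := P) (fun w _ => le_of_lt (lt_of_lt_of_le hκ (hP1 w)))
        (Finset.mem_univ z)
      linarith [hP2 ▸ this]
    · intro z _
      refine ⟨hQ1 z, ?_⟩
      have := Finset.single_le_sum (f := Q) (fun w _ => hQ1 w) (Finset.mem_univ z)
      linarith [hQ2 ▸ this]
  -- klDiv is continuous on S
  have hF : ContinuousOn (fun x : E × E => klDiv x.2 x.1) S := by
    have hsub : S ⊆ {x : E × E | ∀ z, κ ≤ x.1 z} := by
      rintro ⟨P, Q⟩ ⟨⟨hP1, _, _⟩, _⟩; exact hP1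
    apply ContinuousOn.mono (s := {x : E × E | ∀ z, κ ≤ x.1 z}) ?_ hsub
    have heq : Set.EqOn (fun x : E × E => klDiv x.2 x.1)
        (fun x : E × E => ∑ z, x.1 z * ((x.2 z / x.1 z) * Real.log (x.2 z / x.1 z)))
        {x : E × E | ∀ z, κ ≤ x.1 z} := by
      intro x hx
      unfold klDiv
      apply Finset.sum_congr rfl
      intro z _
      have h1 : x.1 z ≠ 0 := ne_of_gt (lt_of_lt_of_le hκ (hx z))
      field_simp
    apply ContinuousOn.congr ?_ heq
    apply continuousOn_finset_sum
    intro z _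
    apply ContinuousOn.mul ((continuous_apply z).comp continuous_fst).continuousOn
    apply Real.continuous_mul_log.comp_continuousOn
    exact ContinuousOn.div ((continuous_apply z).comp continuous_snd).continuousOn
      ((continuous_apply z).comp continuous_fst).continuousOn
      (fun x hx => ne_of_gt (lt_of_lt_of_le hκ (hx z)))
  -- minimum attained
  obtain ⟨x₀, hx₀S, hmin⟩ := hScompact.exists_isMinOn hS hF
  set c : ℝ := klDiv x₀.2 x₀.1 with hc_def
  obtain ⟨⟨hP1, hP2, hP3⟩, hQ1, hQ2, hQindep⟩ := hx₀S
  have hc_nonneg_eq := klDiv_nonneg_and_eq x₀.2 x₀.1 hQ1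
    (fun z => le_of_lt (lt_of_lt_of_le hκ (hP1 z)))
    (fun z hz => absurd hz (ne_of_gt (lt_of_lt_of_le hκ (hP1 z))))
    (by rw [hQ2, hP2])
  have hc_pos : 0 < c := by
    rcases lt_or_eq_of_le hc_nonneg_eq.1 with h | h
    · exact h
    · exfalso
      have hQP := hc_nonneg_eq.2 h.symm
      have : mutInfo x₀.1 = 0 := by
        rw [← hQP]; exact mutInfo_zero_of_indep x₀.2 hQindep
      linarith
  have hlog2 : 0 < Real.log 2 := Real.log_pos (by norm_num)
  have hprod : 0 < 2 * Real.log 2 * c := by positivity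
  set U : ℝ := Iinf / Real.sqrt (2 * Real.log 2 * c) with hU_def
  have hsqrt_pos : 0 < Real.sqrt (2 * Real.log 2 * c) := Real.sqrt_pos.2 hprod
  have hU_pos : 0 < U := div_pos hIinf hsqrt_pos
  refine ⟨U, hU_pos, fun P hPa hPb hPc Q hQa hQb hQc => ?_⟩
  have hmem' := hmem P hPa hPb hPc Q hQa hQb hQc
  have hbound : c ≤ klDiv Q P := hmin hmem'
  have hU2 : U ^ 2 = Iinf ^ 2 / (2 * Real.log 2 * c) := by
    rw [hU_def, div_pow, Real.sq_sqrt (le_of_lt hprod)]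
  have hkey : Iinf ^ 2 / (2 * Real.log 2 * U ^ 2) = c := by
    rw [hU2]
    field_simp
  rw [hkey]
  exact hbound
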